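/- (Madelung/Bohm decomposition, two particles.) Let m₁, m₂ > 0, V : ℝ × ℝ × ℝ → ℝ, and let R, S : ℝ × ℝ × ℝ → ℝ (arguments x₁, x₂, t) be such that R > 0 everywhere and all partial derivatives below exist. Define ψ(x₁,x₂,t) := R·e^{iS}. Then ψ satisfies the two-particle Schrödinger equation i·∂_t ψ = −(1/(2m₁))·∂_{x₁}² ψ − (1/(2m₂))·∂_{x₂}² ψ + V·ψ at every point if and only if at every point: (i) ∂_t(R²) = −( ∂_{x₁}(R²·∂_{x₁}S/m₁) + ∂_{x₂}(R²·∂_{x₂}S/m₂) ), and (ii) ∂_t S = −( (∂_{x₁}S)²/(2m₁) + (∂_{x₂}S)²/(2m₂) ) − V + ( (1/(2m₁))·∂_{x₁}²R/R + (1/(2m₂))·∂_{x₂}²R/R ). Here the phase function S and amplitude R depend on both particle positions simultaneously (the problem of 'polydimensions'). -/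

import Mathlib

/-!
For `ψ = R e^{iS}` the product and chain rules give `∂ψ = (∂R + i R ∂S) e^{iS}` and
`∂²ψ = (∂²R - R (∂S)² + i (2 ∂R ∂S + R ∂²S)) e^{iS}` in each variable. Cancelling the nonvanishing
phase `e^{iS}`, the Schrödinger equation at a point becomes one complex equation between real
combinations of the derivatives of `R` and `S`: its imaginary part is the continuity equation
divided by `2R`, and its real part is `-R` times the quantum Hamilton–Jacobi equation. Since
`R ≠ 0`, both systems are equivalent point by point.
-/

open Complex

section Calculus

variable {𝕜 : Type*} [NontriviallyNormedField 𝕜] {f h : 𝕜 → 𝕜} {x : 𝕜}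

theorem deriv_fun_sq (hf : DifferentiableAt 𝕜 f x) :
    deriv (fun y => f y ^ 2) x = 2 * f x * deriv f x := by
  rw [deriv_fun_pow hf 2]
  ring

theorem deriv_sq_mul_div_const (m : 𝕜) (hf : DifferentiableAt 𝕜 f x)
    (hh : DifferentiableAt 𝕜 h x) :
    deriv (fun y => f y ^ 2 * h y / m) x =
      (2 * f x * deriv f x * h x + f x ^ 2 * deriv h x) / m := by
  rw [deriv_div_const, deriv_fun_mul (hf.fun_pow 2) hh, deriv_fun_sq hf]

end Calculus

section Phase

variable {a : ℝ → ℂ} {f g : ℝ → ℝ} {a' : ℂ} {g' x : ℝ}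

theorem HasDerivAt.mul_cexp_I_mul (ha : HasDerivAt a a' x) (hg : HasDerivAt g g' x) :
    HasDerivAt (fun y => a y * cexp (I * (g y : ℂ)))
      ((a' + I * a x * (g' : ℂ)) * cexp (I * (g x : ℂ))) x := by
  refine (ha.fun_mul (hg.ofReal_comp.const_mul I).cexp).congr_deriv ?_
  ring

theorem deriv_ofReal_mul_cexp_I_mul (hf : DifferentiableAt ℝ f x) (hg : DifferentiableAt ℝ g x) :
    deriv (fun y => (f y : ℂ) * cexp (I * (g y : ℂ))) x =
      (↑(deriv f x) + I * f x * deriv g x) * cexp (I * (g x : ℂ)) :=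
  (HasDerivAt.mul_cexp_I_mul hf.hasDerivAt.ofReal_comp hg.hasDerivAt).deriv

theorem deriv_deriv_ofReal_mul_cexp_I_mul (hf : ∀ y, DifferentiableAt ℝ f y)
    (hg : ∀ y, DifferentiableAt ℝ g y) (hf' : DifferentiableAt ℝ (deriv f) x)
    (hg' : DifferentiableAt ℝ (deriv g) x) :
    deriv (fun y => deriv (fun z => (f z : ℂ) * cexp (I * (g z : ℂ))) y) x =
      (↑(deriv (deriv f) x) - f x * deriv g x ^ 2 +
        I * (2 * deriv f x * deriv g x + f x * deriv (deriv g) x)) * cexp (I * (g x : ℂ)) := by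
  have hamp : HasDerivAt (fun y => ↑(deriv f y) + I * (↑(f y) * ↑(deriv g y)))
      (↑(deriv (deriv f) x) + I * (deriv f x * deriv g x + f x * deriv (deriv g) x)) x :=
    hf'.hasDerivAt.ofReal_comp.fun_add
      (((hf x).hasDerivAt.ofReal_comp.fun_mul hg'.hasDerivAt.ofReal_comp).const_mul I)
  simp only [deriv_ofReal_mul_cexp_I_mul (hf _) (hg _), mul_assoc I]
  rw [(hamp.mul_cexp_I_mul (hg x).hasDerivAt).deriv]
  linear_combination ((f x : ℂ) * deriv g x ^ 2 * cexp (I * (g x : ℂ))) * I_mul_I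

end Phase

theorem ofReal_add_ofReal_mul_I_mul_right_inj {a b c d : ℝ} {E : ℂ} (hE : E ≠ 0) :
    (a + b * I) * E = (c + d * I) * E ↔ a = c ∧ b = d := by
  rw [mul_left_inj' hE, Complex.ext_iff]
  simp

theorem schrodinger_iff_madelung {m₁ m₂ v r rt st r₁ s₁ r₁₁ s₁₁ r₂ s₂ r₂₂ s₂₂ : ℝ} {E : ℂ}
    (hE : E ≠ 0) (hr : r ≠ 0) :
    I * ((rt + I * r * st) * E) =
        -(1 / (2 * (m₁ : ℂ))) * ((r₁₁ - r * s₁ ^ 2 + I * (2 * r₁ * s₁ + r * s₁₁)) * E) +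
          -(1 / (2 * (m₂ : ℂ))) * ((r₂₂ - r * s₂ ^ 2 + I * (2 * r₂ * s₂ + r * s₂₂)) * E) +
          v * (r * E) ↔
      2 * r * rt = -((2 * r * r₁ * s₁ + r ^ 2 * s₁₁) / m₁ + (2 * r * r₂ * s₂ + r ^ 2 * s₂₂) / m₂) ∧
        st = -(s₁ ^ 2 / (2 * m₁) + s₂ ^ 2 / (2 * m₂)) - v +
          (1 / (2 * m₁) * (r₁₁ / r) + 1 / (2 * m₂) * (r₂₂ / r)) := by
  have hlhs : I * ((rt + I * r * st) * E) = (↑(-(r * st)) + ↑rt * I) * E := by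
    push_cast
    linear_combination (r * st * E : ℂ) * I_mul_I
  have hrhs : -(1 / (2 * (m₁ : ℂ))) * ((r₁₁ - r * s₁ ^ 2 + I * (2 * r₁ * s₁ + r * s₁₁)) * E) +
      -(1 / (2 * (m₂ : ℂ))) * ((r₂₂ - r * s₂ ^ 2 + I * (2 * r₂ * s₂ + r * s₂₂)) * E) +
      v * (r * E) =
        (((-(1 / (2 * m₁)) * (r₁₁ - r * s₁ ^ 2) - 1 / (2 * m₂) * (r₂₂ - r * s₂ ^ 2) +
            v * r : ℝ) : ℂ) +
          ((-(1 / (2 * m₁)) * (2 * r₁ * s₁ + r * s₁₁) -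
            1 / (2 * m₂) * (2 * r₂ * s₂ + r * s₂₂) : ℝ) : ℂ) * I) * E := by
    push_cast
    ring
  rw [hlhs, hrhs, ofReal_add_ofReal_mul_I_mul_right_inj hE, and_comm]
  refine and_congr ?continuity ?hamiltonJacobi
  case continuity =>
    rw [← mul_right_inj' (mul_ne_zero two_ne_zero hr)]
    constructor <;> intro h <;> linear_combination h
  case hamiltonJacobi =>
    have hquantum :
        -(1 / (2 * m₁)) * (r₁₁ - r * s₁ ^ 2) - 1 / (2 * m₂) * (r₂₂ - r * s₂ ^ 2) + v * r =
        -(r * (-(s₁ ^ 2 / (2 * m₁) + s₂ ^ 2 / (2 * m₂)) - v +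
          (1 / (2 * m₁) * (r₁₁ / r) + 1 / (2 * m₂) * (r₂₂ / r)))) := by
      field_simp
      ring
    rw [hquantum, neg_inj, mul_right_inj' hr]

theorem madelung_bohm_two_particles_general
    (m₁ m₂ : ℝ)
    (V : ℝ → ℝ → ℝ → ℝ) (R S : ℝ → ℝ → ℝ → ℝ)
    (hRpos : ∀ x₁ x₂ t, 0 < R x₁ x₂ t)
    (hRt : ∀ x₁ x₂ t, DifferentiableAt ℝ (fun τ => R x₁ x₂ τ) t)
    (hSt : ∀ x₁ x₂ t, DifferentiableAt ℝ (fun τ => S x₁ x₂ τ) t)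
    (hRx₁ : ∀ x₁ x₂ t, DifferentiableAt ℝ (fun ξ => R ξ x₂ t) x₁)
    (hSx₁ : ∀ x₁ x₂ t, DifferentiableAt ℝ (fun ξ => S ξ x₂ t) x₁)
    (hRx₂ : ∀ x₁ x₂ t, DifferentiableAt ℝ (fun η => R x₁ η t) x₂)
    (hSx₂ : ∀ x₁ x₂ t, DifferentiableAt ℝ (fun η => S x₁ η t) x₂)
    (hRx₁x₁ : ∀ x₁ x₂ t, DifferentiableAt ℝ (fun ξ => deriv (fun ξ' => R ξ' x₂ t) ξ) x₁)
    (hSx₁x₁ : ∀ x₁ x₂ t, DifferentiableAt ℝ (fun ξ => deriv (fun ξ' => S ξ' x₂ t) ξ) x₁)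
    (hRx₂x₂ : ∀ x₁ x₂ t, DifferentiableAt ℝ (fun η => deriv (fun η' => R x₁ η' t) η) x₂)
    (hSx₂x₂ : ∀ x₁ x₂ t, DifferentiableAt ℝ (fun η => deriv (fun η' => S x₁ η' t) η) x₂) :
    (∀ x₁ x₂ t,
        Complex.I *
            deriv (fun τ => (R x₁ x₂ τ : ℂ) * Complex.exp (Complex.I * (S x₁ x₂ τ : ℂ))) t =
          -(1 / (2 * (m₁ : ℂ))) *
              deriv (fun ξ =>
                deriv (fun ξ' => (R ξ' x₂ t : ℂ) * Complex.exp (Complex.I * (S ξ' x₂ t : ℂ))) ξ) x₁ +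
            -(1 / (2 * (m₂ : ℂ))) *
              deriv (fun η =>
                deriv (fun η' => (R x₁ η' t : ℂ) * Complex.exp (Complex.I * (S x₁ η' t : ℂ))) η) x₂ +
            (V x₁ x₂ t : ℂ) * ((R x₁ x₂ t : ℂ) * Complex.exp (Complex.I * (S x₁ x₂ t : ℂ)))) ↔
      ((∀ x₁ x₂ t,
          deriv (fun τ => R x₁ x₂ τ ^ 2) t =
            -(deriv (fun ξ => R ξ x₂ t ^ 2 * deriv (fun ξ' => S ξ' x₂ t) ξ / m₁) x₁ +
              deriv (fun η => R x₁ η t ^ 2 * deriv (fun η' => S x₁ η' t) η / m₂) x₂)) ∧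
        (∀ x₁ x₂ t,
          deriv (fun τ => S x₁ x₂ τ) t =
            -((deriv (fun ξ => S ξ x₂ t) x₁) ^ 2 / (2 * m₁) +
                (deriv (fun η => S x₁ η t) x₂) ^ 2 / (2 * m₂)) -
              V x₁ x₂ t +
              ((1 / (2 * m₁)) * (deriv (fun ξ => deriv (fun ξ' => R ξ' x₂ t) ξ) x₁ / R x₁ x₂ t) +
                (1 / (2 * m₂)) * (deriv (fun η => deriv (fun η' => R x₁ η' t) η) x₂ / R x₁ x₂ t)))) := by
  simp only [← forall_and]
  refine forall₃_congr fun x₁ x₂ t => ?_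
  rw [deriv_ofReal_mul_cexp_I_mul (hRt x₁ x₂ t) (hSt x₁ x₂ t),
    deriv_deriv_ofReal_mul_cexp_I_mul (hRx₁ · x₂ t) (hSx₁ · x₂ t) (hRx₁x₁ x₁ x₂ t) (hSx₁x₁ x₁ x₂ t),
    deriv_deriv_ofReal_mul_cexp_I_mul (hRx₂ x₁ · t) (hSx₂ x₁ · t) (hRx₂x₂ x₁ x₂ t) (hSx₂x₂ x₁ x₂ t),
    deriv_fun_sq (hRt x₁ x₂ t), deriv_sq_mul_div_const m₁ (hRx₁ x₁ x₂ t) (hSx₁x₁ x₁ x₂ t),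
    deriv_sq_mul_div_const m₂ (hRx₂ x₁ x₂ t) (hSx₂x₂ x₁ x₂ t)]
  exact schrodinger_iff_madelung (exp_ne_zero _) (hRpos x₁ x₂ t).ne'

/-- Madelung/Bohm decomposition, two particles: with
`ψ(x₁,x₂,t) = R e^{iS}`, `R > 0`, the two-particle Schrödinger equation
`i ∂_t ψ = −(1/(2m₁)) ∂_{x₁}² ψ − (1/(2m₂)) ∂_{x₂}² ψ + V ψ` holds at every point iff
the continuity equation `∂_t(R²) = −(∂_{x₁}(R² ∂_{x₁}S/m₁) + ∂_{x₂}(R² ∂_{x₂}S/m₂))`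
and the quantum Hamilton–Jacobi equation
`∂_t S = −((∂_{x₁}S)²/(2m₁) + (∂_{x₂}S)²/(2m₂)) − V + ((1/(2m₁)) ∂_{x₁}²R/R + (1/(2m₂)) ∂_{x₂}²R/R)`
hold at every point (units `ℏ = 1`). -/
theorem madelung_bohm_two_particles
    (m₁ m₂ : ℝ) (hm₁ : 0 < m₁) (hm₂ : 0 < m₂)
    (V : ℝ → ℝ → ℝ → ℝ) (R S : ℝ → ℝ → ℝ → ℝ)
    (hRpos : ∀ x₁ x₂ t, 0 < R x₁ x₂ t)
    (hRt : ∀ x₁ x₂ t, DifferentiableAt ℝ (fun τ => R x₁ x₂ τ) t)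
    (hSt : ∀ x₁ x₂ t, DifferentiableAt ℝ (fun τ => S x₁ x₂ τ) t)
    (hRx₁ : ∀ x₁ x₂ t, DifferentiableAt ℝ (fun ξ => R ξ x₂ t) x₁)
    (hSx₁ : ∀ x₁ x₂ t, DifferentiableAt ℝ (fun ξ => S ξ x₂ t) x₁)
    (hRx₂ : ∀ x₁ x₂ t, DifferentiableAt ℝ (fun η => R x₁ η t) x₂)
    (hSx₂ : ∀ x₁ x₂ t, DifferentiableAt ℝ (fun η => S x₁ η t) x₂)
    (hRx₁x₁ : ∀ x₁ x₂ t, DifferentiableAt ℝ (fun ξ => deriv (fun ξ' => R ξ' x₂ t) ξ) x₁)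
    (hSx₁x₁ : ∀ x₁ x₂ t, DifferentiableAt ℝ (fun ξ => deriv (fun ξ' => S ξ' x₂ t) ξ) x₁)
    (hRx₂x₂ : ∀ x₁ x₂ t, DifferentiableAt ℝ (fun η => deriv (fun η' => R x₁ η' t) η) x₂)
    (hSx₂x₂ : ∀ x₁ x₂ t, DifferentiableAt ℝ (fun η => deriv (fun η' => S x₁ η' t) η) x₂) :
    (∀ x₁ x₂ t,
        Complex.I *
            deriv (fun τ => (R x₁ x₂ τ : ℂ) * Complex.exp (Complex.I * (S x₁ x₂ τ : ℂ))) t =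
          -(1 / (2 * (m₁ : ℂ))) *
              deriv (fun ξ =>
                deriv (fun ξ' => (R ξ' x₂ t : ℂ) * Complex.exp (Complex.I * (S ξ' x₂ t : ℂ))) ξ) x₁ +
            -(1 / (2 * (m₂ : ℂ))) *
              deriv (fun η =>
                deriv (fun η' => (R x₁ η' t : ℂ) * Complex.exp (Complex.I * (S x₁ η' t : ℂ))) η) x₂ +
            (V x₁ x₂ t : ℂ) * ((R x₁ x₂ t : ℂ) * Complex.exp (Complex.I * (S x₁ x₂ t : ℂ)))) ↔
      ((∀ x₁ x₂ t,
          deriv (fun τ => R x₁ x₂ τ ^ 2) t =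
            -(deriv (fun ξ => R ξ x₂ t ^ 2 * deriv (fun ξ' => S ξ' x₂ t) ξ / m₁) x₁ +
              deriv (fun η => R x₁ η t ^ 2 * deriv (fun η' => S x₁ η' t) η / m₂) x₂)) ∧
        (∀ x₁ x₂ t,
          deriv (fun τ => S x₁ x₂ τ) t =
            -((deriv (fun ξ => S ξ x₂ t) x₁) ^ 2 / (2 * m₁) +
                (deriv (fun η => S x₁ η t) x₂) ^ 2 / (2 * m₂)) -
              V x₁ x₂ t +
              ((1 / (2 * m₁)) * (deriv (fun ξ => deriv (fun ξ' => R ξ' x₂ t) ξ) x₁ / R x₁ x₂ t) +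
                (1 / (2 * m₂)) * (deriv (fun η => deriv (fun η' => R x₁ η' t) η) x₂ / R x₁ x₂ t)))) :=
  madelung_bohm_two_particles_general m₁ m₂ V R S hRpos hRt hSt hRx₁ hSx₁ hRx₂ hSx₂ hRx₁x₁ hSx₁x₁
    hRx₂x₂ hSx₂x₂
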